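/- arXiv:1602.02608 — 5 statements merged into one kernel-verified Lean document; each statement's English description precedes it below -/
import Mathlib

section
/- Let V be an open subset of ℝⁿ × ℝᵐ and let f : V → ℝ be a smooth (C^∞) nonnegative function which vanishes on V ∩ (ℝⁿ × {0}) and such that at every point (x,0) ∈ V the Hessian of f (the symmetric bilinear form given by the second derivative D²f(x,0) on ℝⁿ × ℝᵐ) has rank m. Then V ∩ (ℝⁿ × {0}) is an open subset of the zero set f⁻¹(0); equivalently, every point (x,0) ∈ V has a neighborhood W ⊆ V such that f(z) > 0 for every z ∈ W with z ∉ ℝⁿ × {0}. -/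
open Set Metric




private lemma aux_zero {a b : ℝ} (hb : 0 ≤ b) (h : ∀ t : ℝ, 0 ≤ 2*t*a + t^2*b) : a = 0 := by
  have hb1 : (0:ℝ) < b + 1 := by linarith
  have ht := h (-(a/(b+1)))
  have hc : a / (b+1) * (b+1) = a := div_mul_cancel₀ _ hb1.ne'
  nlinarith [sq_nonneg (a/(b+1)), sq_nonneg a]


lemma mvt2 {E : Type*} [NormedAddCommGroup E] [NormedSpace ℝ E]
    {f : E → ℝ} {V : Set E} (hV : IsOpen V) (hf : ContDiffOn ℝ (⊤ : ℕ∞) f V)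
    {p v : E} (hseg : ∀ s : ℝ, s ∈ Icc (0:ℝ) 1 → p + s • v ∈ V)
    (hf0 : f p = 0) (hd0 : fderiv ℝ f p = 0) :
    ∃ θ₁ ∈ Ioo (0:ℝ) 1, ∃ θ₂ ∈ Ioo (0:ℝ) θ₁,
      f (p + v) = θ₁ * ((fderiv ℝ (fderiv ℝ f) (p + θ₂ • v)) v v) := by
  set γ : ℝ → E := fun s => p + s • v with hγ
  have hγd : ∀ s : ℝ, HasDerivAt γ v s := by
    intro s
    simpa [hγ] using ((hasDerivAt_id s).smul_const v).const_add p
  have hdiff : ∀ q ∈ V, HasFDerivAt f (fderiv ℝ f q) q := by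
    intro q hq
    exact (((hf q hq).contDiffAt (hV.mem_nhds hq)).differentiableAt (by norm_num)).hasFDerivAt
  have hdiff2 : ∀ q ∈ V, HasFDerivAt (fderiv ℝ f) (fderiv ℝ (fderiv ℝ f) q) q := by
    intro q hq
    exact ((((hf q hq).contDiffAt (hV.mem_nhds hq)).fderiv_right (m := 1)
      (WithTop.coe_le_coe.mpr le_top)).differentiableAt (by norm_num)).hasFDerivAt
  set g : ℝ → ℝ := fun s => f (γ s) with hgdef
  set g1 : ℝ → ℝ := fun s => fderiv ℝ f (γ s) v with hg1def
  have hg : ∀ s ∈ Icc (0:ℝ) 1, HasDerivAt g (g1 s) s := fun s hs =>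
    (hdiff _ (hseg s hs)).comp_hasDerivAt s (hγd s)
  have hg1 : ∀ s ∈ Icc (0:ℝ) 1,
      HasDerivAt g1 (fderiv ℝ (fderiv ℝ f) (γ s) v v) s := by
    intro s hs
    have h0 := (hdiff2 _ (hseg s hs)).comp_hasDerivAt s (hγd s)
    have h := h0.clm_apply (hasDerivAt_const s v)
    simpa using h
  have hg0 : g 0 = 0 := by simp [hgdef, hγ, hf0]
  have hg10 : g1 0 = 0 := by simp [hg1def, hγ, hd0]
  obtain ⟨θ₁, hθ₁, h1⟩ := exists_hasDerivAt_eq_slope g g1 one_pos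
    (fun s hs => (hg s hs).continuousAt.continuousWithinAt)
    (fun s hs => hg s (Ioo_subset_Icc_self hs))
  obtain ⟨θ₂, hθ₂, h2⟩ := exists_hasDerivAt_eq_slope g1
    (fun s => fderiv ℝ (fderiv ℝ f) (γ s) v v) hθ₁.1
    (fun s hs => (hg1 s ⟨hs.1, hs.2.trans hθ₁.2.le⟩).continuousAt.continuousWithinAt)
    (fun s hs => hg1 s ⟨hs.1.le, (hs.2.trans hθ₁.2).le⟩)
  refine ⟨θ₁, hθ₁, θ₂, hθ₂, ?_⟩
  have hpv : g 1 = f (p + v) := by simp [hgdef, hγ]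
  rw [hg0, sub_zero, sub_zero, div_one] at h1
  rw [hg10, sub_zero, sub_zero] at h2
  rw [eq_div_iff (ne_of_gt hθ₁.1)] at h2
  have hq : γ θ₂ = p + θ₂ • v := rfl
  rw [← hq, ← hpv]
  linarith [h1, h2]



set_option maxHeartbeats 1000000

/-- Let `V ⊆ ℝⁿ × ℝᵐ` be open and `f : V → ℝ` smooth, nonnegative,
vanishing on `V ∩ (ℝⁿ × {0})`, and such that at every point `(x, 0) ∈ V` the Hessian of `f`
(second Fréchet derivative) has rank `m`. Then `V ∩ (ℝⁿ × {0})` is open in `f⁻¹(0)`: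
every `(x, 0) ∈ V` has a neighborhood `W ⊆ V` on which `f > 0` off `ℝⁿ × {0}`. -/
theorem stmt4 (n m : ℕ) (V : Set ((Fin n → ℝ) × (Fin m → ℝ))) (hV : IsOpen V)
    (f : (Fin n → ℝ) × (Fin m → ℝ) → ℝ)
    (hf : ContDiffOn ℝ (⊤ : ℕ∞) f V)
    (hnonneg : ∀ p ∈ V, 0 ≤ f p)
    (hvanish : ∀ p ∈ V, p.2 = 0 → f p = 0)
    (hhess : ∀ x : Fin n → ℝ, (x, (0 : Fin m → ℝ)) ∈ V →
      LinearMap.rank ((fderiv ℝ (fderiv ℝ f) (x, 0)).toLinearMap) = (m : Cardinal)) :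
    ∀ x : Fin n → ℝ, (x, (0 : Fin m → ℝ)) ∈ V →
      ∃ W : Set ((Fin n → ℝ) × (Fin m → ℝ)), IsOpen W ∧ (x, (0 : Fin m → ℝ)) ∈ W ∧ W ⊆ V ∧
        ∀ z ∈ W, z.2 ≠ 0 → 0 < f z := by
  intro x₀ hx₀
  rcases Nat.eq_zero_or_pos m with hm | hm
  · subst hm
    exact ⟨V, hV, hx₀, le_refl _, fun z hz hz2 =>
      absurd (Subsingleton.elim z.2 0) hz2⟩
  haveI : Nonempty (Fin m) := ⟨⟨0, hm⟩⟩
  set p₀ : (Fin n → ℝ) × (Fin m → ℝ) := (x₀, 0) with hp₀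
  set B := fderiv ℝ (fderiv ℝ f) p₀ with hBdef
  -- first derivative vanishes on the zero section
  have hd0 : ∀ q ∈ V, q.2 = 0 → fderiv ℝ f q = 0 := by
    intro q hq hq2
    apply IsLocalMin.fderiv_eq_zero
    filter_upwards [hV.mem_nhds hq] with p hp
    rw [hvanish q hq hq2]; exact hnonneg p hp
  -- differentiability facts
  have hdiff : ∀ q ∈ V, HasFDerivAt f (fderiv ℝ f q) q := by
    intro q hq
    exact (((hf q hq).contDiffAt (hV.mem_nhds hq)).differentiableAt (by norm_num)).hasFDerivAt
  have hdiff2 : ∀ q ∈ V, HasFDerivAt (fderiv ℝ f) (fderiv ℝ (fderiv ℝ f) q) q := by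
    intro q hq
    exact ((((hf q hq).contDiffAt (hV.mem_nhds hq)).fderiv_right (m := 1)
      (WithTop.coe_le_coe.mpr le_top)).differentiableAt (by norm_num)).hasFDerivAt
  -- continuity of the second derivative
  have hcont2 : ContinuousOn (fderiv ℝ (fderiv ℝ f)) V :=
    (hf.fderiv_of_isOpen (m := 1) hV (WithTop.coe_le_coe.mpr le_top)).continuousOn_fderiv_of_isOpen hV le_rfl
  -- symmetry of B
  have hsymm : ∀ v w, B v w = B w v := by
    intro v w
    refine second_derivative_symmetric_of_eventually (f := f) ?_ (hdiff2 p₀ hx₀) v w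
    filter_upwards [hV.mem_nhds hx₀] with q hq using hdiff q hq
  -- B is positive semidefinite
  have hpsd : ∀ v, 0 ≤ B v v := by
    intro v
    by_contra hneg
    push_neg at hneg
    have hc : ContinuousWithinAt (fun q => fderiv ℝ (fderiv ℝ f) q v v) V p₀ := by
      have h1 : Continuous fun A : ((Fin n → ℝ) × (Fin m → ℝ)) →L[ℝ]
          (((Fin n → ℝ) × (Fin m → ℝ)) →L[ℝ] ℝ) => A v v :=
        ((ContinuousLinearMap.apply ℝ ℝ v).continuous).comp
          ((ContinuousLinearMap.apply ℝ (((Fin n → ℝ) × (Fin m → ℝ)) →L[ℝ] ℝ) v).continuous)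
      exact h1.continuousAt.comp_continuousWithinAt (hcont2 p₀ hx₀)
    have hev : ∀ᶠ q in nhds p₀, fderiv ℝ (fderiv ℝ f) q v v < 0 ∧ q ∈ V := by
      have h1 : ∀ᶠ q in nhdsWithin p₀ V, fderiv ℝ (fderiv ℝ f) q v v < 0 :=
        hc (isOpen_Iio.mem_nhds hneg)
      rw [← nhdsWithin_eq_nhds.2 (hV.mem_nhds hx₀)]
      exact h1.and self_mem_nhdsWithin
    obtain ⟨δ, hδ, hball⟩ := Metric.eventually_nhds_iff_ball.mp hev
    set t : ℝ := δ / (2 * (‖v‖ + 1)) with htdef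
    have hvpos : (0:ℝ) < ‖v‖ + 1 := by positivity
    have ht : 0 < t := div_pos hδ (by positivity)
    have htv : t * ‖v‖ < δ := by
      rw [htdef, div_mul_eq_mul_div, div_lt_iff₀ (by positivity)]
      nlinarith [norm_nonneg v, hδ]
    have hseg : ∀ s : ℝ, s ∈ Icc (0:ℝ) 1 → p₀ + s • (t • v) ∈ ball p₀ δ := by
      intro s hs
      have hn : ‖p₀ + s • t • v - p₀‖ = s * (t * ‖v‖) := by
        rw [add_sub_cancel_left, norm_smul, norm_smul, Real.norm_of_nonneg hs.1,
          Real.norm_of_nonneg ht.le]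
      simp only [mem_ball, dist_eq_norm, hn]
      have h1 : s * (t * ‖v‖) ≤ t * ‖v‖ :=
        mul_le_of_le_one_left (mul_nonneg ht.le (norm_nonneg v)) hs.2
      linarith
    obtain ⟨θ₁, hθ₁, θ₂, hθ₂, heq⟩ := mvt2 hV hf
      (fun s hs => (hball _ (hseg s hs)).2) (hvanish p₀ hx₀ rfl) (hd0 p₀ hx₀ rfl)
    have hq2 : p₀ + θ₂ • (t • v) ∈ ball p₀ δ :=
      hseg θ₂ ⟨hθ₂.1.le, hθ₂.2.le.trans hθ₁.2.le⟩
    have hlt := (hball _ hq2).1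
    have hfpos := hnonneg _ (hball _ (hseg 1 ⟨zero_le_one, le_refl 1⟩)).2
    rw [one_smul] at hfpos
    have hDexp : (fderiv ℝ (fderiv ℝ f) (p₀ + θ₂ • t • v)) (t • v) (t • v)
        = t^2 * (fderiv ℝ (fderiv ℝ f) (p₀ + θ₂ • t • v)) v v := by
      simp only [map_smul, ContinuousLinearMap.smul_apply, smul_eq_mul]
      ring
    rw [heq, hDexp] at hfpos
    have : θ₁ * (t^2 * (fderiv ℝ (fderiv ℝ f) (p₀ + θ₂ • t • v)) v v) < 0 :=
      mul_neg_of_pos_of_neg hθ₁.1 (mul_neg_of_pos_of_neg (pow_pos ht 2) hlt)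
    linarith
  -- kernel of B contains the horizontal subspace
  have hker : ∀ u : Fin n → ℝ, B (u, 0) = 0 := by
    intro u
    set w : (Fin n → ℝ) × (Fin m → ℝ) := (u, 0) with hwdef
    have hγd : ∀ s : ℝ, HasDerivAt (fun s : ℝ => p₀ + s • w) w s := by
      intro s; simpa using ((hasDerivAt_id s).smul_const w).const_add p₀
    have hcontγ : Continuous (fun s : ℝ => p₀ + s • w) :=
      continuous_const.add (continuous_id.smul continuous_const)
    have hev : ∀ᶠ s in nhds (0:ℝ), fderiv ℝ f (p₀ + s • w) = 0 := by
      have hmem : ∀ᶠ s in nhds (0:ℝ), p₀ + s • w ∈ V := by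
        apply hcontγ.continuousAt.preimage_mem_nhds
        simpa using hV.mem_nhds hx₀
      filter_upwards [hmem] with s hs
      apply hd0 _ hs
      show (p₀ + s • w).2 = 0
      simp [hp₀, hwdef]
    have hγ0 : p₀ + (0:ℝ) • w = p₀ := by simp
    have h1 : HasDerivAt (fun s : ℝ => fderiv ℝ f (p₀ + s • w)) (B w) 0 := by
      refine HasFDerivAt.comp_hasDerivAt 0 ?_ (hγd 0)
      rw [hγ0]
      exact hdiff2 p₀ hx₀
    have h2 : HasDerivAt (fun s : ℝ => fderiv ℝ f (p₀ + s • w)) 0 0 := by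
      have h0 : HasDerivAt (fun _ : ℝ => (0 : ((Fin n → ℝ) × (Fin m → ℝ)) →L[ℝ] ℝ)) 0 0 :=
        hasDerivAt_const _ _
      exact h0.congr_of_eventuallyEq (by filter_upwards [hev] with s hs using hs)
    exact h1.unique h2
  -- if B w w = 0 then B w = 0
  have hBzero : ∀ w, B w w = 0 → B w = 0 := by
    intro w hww
    refine ContinuousLinearMap.ext fun z => ?_
    have key : ∀ t : ℝ, 0 ≤ 2*t*(B w z) + t^2*(B z z) := by
      intro t
      have h0 := hpsd (w + t • z)
      have hexp : B (w + t • z) (w + t • z)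
          = B w w + t*(B w z) + t*(B z w) + t^2*(B z z) := by
        simp only [map_add, map_smul, ContinuousLinearMap.add_apply,
          ContinuousLinearMap.smul_apply, smul_eq_mul]
        ring
      rw [hexp, hww, hsymm z w] at h0
      linarith
    have := aux_zero (hpsd z) key
    simpa using this
  -- B does not kill nonzero vertical vectors
  have hBvert : ∀ y : Fin m → ℝ, y ≠ 0 → B (0, y) ≠ 0 := by
    intro y hy hBy
    have hrank := hhess x₀ hx₀
    have hSle : LinearMap.range (LinearMap.inl ℝ (Fin n → ℝ) (Fin m → ℝ))
        ≤ LinearMap.ker B.toLinearMap := by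
      rintro q ⟨u, rfl⟩
      show B.toLinearMap (LinearMap.inl ℝ _ _ u) = 0
      simpa using hker u
    have hfr : Module.finrank ℝ (LinearMap.range B.toLinearMap) = m :=
      Module.finrank_eq_of_rank_eq hrank
    have hfull : Module.finrank ℝ ((Fin n → ℝ) × (Fin m → ℝ)) = n + m := by simp
    have hfk : Module.finrank ℝ (LinearMap.ker B.toLinearMap) = n := by
      have h := LinearMap.finrank_range_add_finrank_ker B.toLinearMap
      rw [hfr, hfull] at h; omega
    have hSfr : Module.finrank ℝ
        (LinearMap.range (LinearMap.inl ℝ (Fin n → ℝ) (Fin m → ℝ))) = n := by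
      rw [LinearMap.finrank_range_of_inj LinearMap.inl_injective]
      simp
    have hEq : LinearMap.range (LinearMap.inl ℝ (Fin n → ℝ) (Fin m → ℝ))
        = LinearMap.ker B.toLinearMap :=
      Submodule.eq_of_le_of_finrank_le hSle (by rw [hfk, hSfr])
    have hmem : ((0:Fin n → ℝ), y) ∈ LinearMap.ker B.toLinearMap := by
      show B.toLinearMap ((0:Fin n → ℝ), y) = 0
      exact hBy
    rw [← hEq] at hmem
    obtain ⟨u, hu⟩ := hmem
    apply hy
    have := congrArg Prod.snd hu
    simpa using this.symm
  -- positivity of B on nonzero vertical vectors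
  have hBpos : ∀ y : Fin m → ℝ, y ≠ 0 → 0 < B (0, y) (0, y) := by
    intro y hy
    rcases (hpsd ((0:Fin n → ℝ), y)).eq_or_lt with h | h
    · exact absurd (hBzero _ h.symm) (hBvert y hy)
    · exact h
  -- minimum of B on the vertical unit sphere
  have hφcont : Continuous fun y : Fin m → ℝ => B (0, y) (0, y) := by
    have hj : Continuous fun y : Fin m → ℝ => (((0:Fin n → ℝ), y) :
        (Fin n → ℝ) × (Fin m → ℝ)) := continuous_const.prodMk continuous_id
    have hB1 : Continuous fun y : Fin m → ℝ => B (0, y) := B.continuous.comp hj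
    exact isBoundedBilinearMap_apply.continuous.comp (hB1.prodMk hj)
  obtain ⟨y₀, hy₀s, hy₀min⟩ := (isCompact_sphere (0:Fin m → ℝ) 1).exists_isMinOn
    (NormedSpace.sphere_nonempty.mpr zero_le_one) hφcont.continuousOn
  set c := B (0, y₀) (0, y₀) with hcdef
  have hy₀ne : y₀ ≠ 0 := by
    intro h
    rw [mem_sphere, h, dist_self] at hy₀s
    exact one_ne_zero hy₀s.symm
  have hc : 0 < c := hBpos y₀ hy₀ne
  have hlow : ∀ y : Fin m → ℝ, c * ‖y‖^2 ≤ B (0, y) (0, y) := by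
    intro y
    rcases eq_or_ne y 0 with rfl | hy
    · simpa using hpsd (0, 0)
    · have hny : (0:ℝ) < ‖y‖ := norm_pos_iff.mpr hy
      set u : Fin m → ℝ := ‖y‖⁻¹ • y with hu
      have hus : u ∈ sphere (0:Fin m → ℝ) 1 := by
        rw [mem_sphere, dist_zero_right, hu, norm_smul, norm_inv, norm_norm,
          inv_mul_cancel₀ hny.ne']
      have hyu : y = ‖y‖ • u := by
        rw [hu, smul_smul, mul_inv_cancel₀ hny.ne', one_smul]
      have hsc : B (0, y) (0, y) = ‖y‖^2 * B (0, u) (0, u) := by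
        have hpe : (((0:Fin n → ℝ), y) : (Fin n → ℝ) × (Fin m → ℝ))
            = ‖y‖ • (((0:Fin n → ℝ), u) : (Fin n → ℝ) × (Fin m → ℝ)) := by
          rw [Prod.smul_mk, smul_zero, ← hyu]
        rw [hpe]
        simp only [map_smul, ContinuousLinearMap.smul_apply, smul_eq_mul]
        ring
      rw [hsc]
      have hmin := isMinOn_iff.mp hy₀min u hus
      nlinarith [sq_nonneg ‖y‖]
  -- choose the radius
  have hcA : ContinuousAt (fderiv ℝ (fderiv ℝ f)) p₀ := hcont2.continuousAt (hV.mem_nhds hx₀)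
  have hev2 : ∀ᶠ q in nhds p₀, ‖fderiv ℝ (fderiv ℝ f) q - B‖ < c/2 ∧ q ∈ V := by
    have h1 : ∀ᶠ q in nhds p₀, ‖fderiv ℝ (fderiv ℝ f) q - B‖ < c/2 := by
      have hb : ball B (c/2) ∈ nhds B := by exact Metric.ball_mem_nhds B (half_pos hc)
      filter_upwards [hcA.preimage_mem_nhds hb] with q hq
      exact (dist_eq_norm (fderiv ℝ (fderiv ℝ f) q) B) ▸ mem_ball.mp hq
    exact h1.and (hV.eventually_mem hx₀)
  obtain ⟨r, hr, hballr⟩ := Metric.eventually_nhds_iff_ball.mp hev2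
  refine ⟨ball p₀ r, isOpen_ball, mem_ball_self hr, fun q hq => (hballr q hq).2, ?_⟩
  rintro ⟨x, y⟩ hz hy
  have hseg : ∀ s : ℝ, s ∈ Icc (0:ℝ) 1 →
      ((x, (0:Fin m → ℝ)) + s • (((0:Fin n → ℝ), y) :
        (Fin n → ℝ) × (Fin m → ℝ))) ∈ ball p₀ r := by
    intro s hs
    have heqp : ((x, (0:Fin m → ℝ)) + s • (((0:Fin n → ℝ), y) :
        (Fin n → ℝ) × (Fin m → ℝ))) = (x, s • y) := by
      rw [Prod.smul_mk, Prod.mk_add_mk, smul_zero, add_zero, zero_add]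
    rw [heqp, mem_ball]
    have hzd := mem_ball.mp hz
    rw [Prod.dist_eq] at hzd ⊢
    have h1 : dist (s • y) ((0:Fin m → ℝ)) ≤ dist y 0 := by
      rw [dist_zero_right, dist_zero_right, norm_smul, Real.norm_of_nonneg hs.1]
      exact mul_le_of_le_one_left (norm_nonneg y) hs.2
    exact lt_of_le_of_lt (max_le_max le_rfl h1) hzd
  have hx0V : ((x, (0:Fin m → ℝ)) : (Fin n → ℝ) × (Fin m → ℝ)) ∈ V := by
    have h := (hballr _ (hseg 0 ⟨le_rfl, zero_le_one⟩)).2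
    simpa using h
  obtain ⟨θ₁, hθ₁, θ₂, hθ₂, heq⟩ := mvt2 hV hf
    (fun s hs => (hballr _ (hseg s hs)).2) (hvanish _ hx0V rfl) (hd0 _ hx0V rfl)
  have hq2ball : ((x, (0:Fin m → ℝ)) + θ₂ • (((0:Fin n → ℝ), y) :
      (Fin n → ℝ) × (Fin m → ℝ))) ∈ ball p₀ r :=
    hseg θ₂ ⟨hθ₂.1.le, hθ₂.2.le.trans hθ₁.2.le⟩
  set D := fderiv ℝ (fderiv ℝ f) ((x, (0:Fin m → ℝ)) + θ₂ • (((0:Fin n → ℝ), y) :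
      (Fin n → ℝ) × (Fin m → ℝ))) with hDdef
  have hnear : ‖D - B‖ < c/2 := (hballr _ hq2ball).1
  have hDlow : c/2 * ‖y‖^2 ≤ D (0, y) (0, y) := by
    have hsplit : D ((0:Fin n → ℝ), y) ((0:Fin n → ℝ), y)
        = B (0, y) (0, y) + (D - B) ((0:Fin n → ℝ), y) ((0:Fin n → ℝ), y) := by
      simp [ContinuousLinearMap.sub_apply]
    have hn : ‖((((0:Fin n → ℝ), y)) : (Fin n → ℝ) × (Fin m → ℝ))‖ = ‖y‖ := by
      simp [Prod.norm_def]
    have hest : |(D - B) ((0:Fin n → ℝ), y) ((0:Fin n → ℝ), y)| ≤ ‖D - B‖ * ‖y‖^2 := by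
      have h2 := (D - B).le_opNorm₂ (((0:Fin n → ℝ), y) : (Fin n → ℝ) × (Fin m → ℝ))
        (((0:Fin n → ℝ), y) : (Fin n → ℝ) × (Fin m → ℝ))
      rw [hn] at h2
      calc |(D - B) ((0:Fin n → ℝ), y) ((0:Fin n → ℝ), y)|
          = ‖(D - B) ((0:Fin n → ℝ), y) ((0:Fin n → ℝ), y)‖ := (Real.norm_eq_abs _).symm
        _ ≤ ‖D - B‖ * ‖y‖ * ‖y‖ := h2
        _ = ‖D - B‖ * ‖y‖^2 := by ring
    have habs := (abs_le.mp hest).1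
    have hlo := hlow y
    have hDB : ‖D - B‖ * ‖y‖^2 ≤ c/2 * ‖y‖^2 :=
      mul_le_mul_of_nonneg_right hnear.le (sq_nonneg _)
    rw [hsplit]
    linarith
  have hypos : (0:ℝ) < ‖y‖ := norm_pos_iff.mpr hy
  have hfinal : 0 < D (0, y) (0, y) := by
    have : (0:ℝ) < c/2 * ‖y‖^2 := by positivity
    linarith
  have hzz : ((x, (0:Fin m → ℝ)) + (((0:Fin n → ℝ), y) :
      (Fin n → ℝ) × (Fin m → ℝ))) = (x, y) := by
    rw [Prod.mk_add_mk, add_zero, zero_add]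
  rw [hzz] at heq
  show 0 < f (x, y)
  rw [heq]
  exact mul_pos hθ₁.1 hfinal
end

section
/- Let l₁,…,l_k : ℝⁿ → ℝ be affine functions (degree-1 polynomials) and let f : ℝⁿ → ℝ be f(x) = ∏_{i=1}^k l_i(x). Then the set of critical values of f, namely {f(x) : x ∈ ℝⁿ and the derivative Df(x) = 0}, is a finite set. -/
/-!
On each cell of `ℝⁿ` where every affine factor `lᵢ` has a fixed nonzero sign,
`log |f| = ∑ i, log |lᵢ|` is concave (`Real.log` is already `log |·|`), so a critical point
of `f` in the cell maximises `log |f|` over the cell; since the sign of `f` is also fixed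
there, `f` takes a single value at its critical points in the cell. On cells where some `lᵢ`
vanishes, `f = 0`, and there are only finitely many sign patterns.
-/

open Set

theorem concaveOn_finset_sum {𝕜 E β ι : Type*} [Semiring 𝕜] [PartialOrder 𝕜] [AddCommMonoid E]
    [AddCommMonoid β] [PartialOrder β] [IsOrderedAddMonoid β] [SMul 𝕜 E] [Module 𝕜 β]
    {s : Set E} {t : Finset ι} {f : ι → E → β} (hs : Convex 𝕜 s)
    (hf : ∀ i ∈ t, ConcaveOn 𝕜 s (f i)) : ConcaveOn 𝕜 s fun x => ∑ i ∈ t, f i x := by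
  classical
  induction t using Finset.induction_on with
  | empty => simpa using concaveOn_const 0 hs
  | insert j t hj ih =>
    simp only [Finset.sum_insert hj]
    exact (hf j (t.mem_insert_self j)).add (ih fun i hi => hf i (Finset.mem_insert_of_mem hi))

theorem convex_setOf_sign_eq (σ : SignType) : Convex ℝ {t : ℝ | SignType.sign t = σ} := by
  cases σ
  · exact (Set.ext fun _ => sign_eq_zero_iff : {t : ℝ | SignType.sign t = 0} = {0}) ▸
      convex_singleton 0
  · exact (Set.ext fun _ => sign_eq_neg_one_iff : {t : ℝ | SignType.sign t = -1} = Iio 0) ▸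
      convex_Iio 0
  · exact (Set.ext fun _ => sign_eq_one_iff : {t : ℝ | SignType.sign t = 1} = Ioi 0) ▸
      convex_Ioi 0

theorem concaveOn_log_setOf_sign_eq {σ : SignType} (hσ : σ ≠ 0) :
    ConcaveOn ℝ {t : ℝ | SignType.sign t = σ} Real.log := by
  cases σ
  · exact absurd rfl hσ
  · exact (Set.ext fun _ => sign_eq_neg_one_iff : {t : ℝ | SignType.sign t = -1} = Iio 0) ▸
      strictConcaveOn_log_Iio.concaveOn
  · exact (Set.ext fun _ => sign_eq_one_iff : {t : ℝ | SignType.sign t = 1} = Ioi 0) ▸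
      strictConcaveOn_log_Ioi.concaveOn

theorem eq_of_sign_eq_of_log_eq {a b : ℝ} (hsign : SignType.sign a = SignType.sign b)
    (hlog : Real.log a = Real.log b) : a = b := by
  rcases eq_or_ne a 0 with rfl | ha
  · exact (sign_eq_zero_iff.1 (hsign.symm.trans sign_zero)).symm
  have hb : b ≠ 0 := fun hb => ha (sign_eq_zero_iff.1 (hsign.trans (by rw [hb, sign_zero])))
  have habs : |a| = |b| := Real.log_injOn_pos (abs_pos.2 ha) (abs_pos.2 hb)
    (by rwa [Real.log_abs, Real.log_abs])
  rw [← sign_mul_abs a, ← sign_mul_abs b, hsign, habs]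

section ProductOfAffineMaps

variable {E : Type*} [NormedAddCommGroup E] [NormedSpace ℝ E]

theorem ConcaveOn.isMaxOn_of_hasFDerivAt_eq_zero {s : Set E} {g : E → ℝ} {x : E}
    (hg : ConcaveOn ℝ s g) (hx : x ∈ s) (hd : HasFDerivAt g (0 : E →L[ℝ] ℝ) x) :
    IsMaxOn g s x := by
  refine isMaxOn_iff.2 fun y hy => sub_nonpos.1 ?_
  have hline : HasDerivAt (fun t : ℝ => g (x + t • (y - x))) 0 0 := by
    have hγ : HasDerivAt (fun t : ℝ => x + t • (y - x)) (y - x) 0 := by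
      simpa using ((hasDerivAt_id (0:ℝ)).smul_const (y - x)).const_add x
    simpa only [Function.comp_def, zero_apply] using hd.comp_hasDerivAt_of_eq (0:ℝ) hγ (by simp)
  have hslope := hline.tendsto_slope_zero_right
  simp only [zero_add, zero_smul, add_zero] at hslope
  refine ge_of_tendsto hslope (Filter.mem_of_superset (Ioc_mem_nhdsGT zero_lt_one) ?_)
  rintro t ⟨ht0, ht1⟩
  have hconc := hg.2 hx hy (sub_nonneg.2 ht1) ht0.le (sub_add_cancel 1 t)
  have hseg : (1 - t) • x + t • y = x + t • (y - x) := by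
    rw [smul_sub, sub_smul, one_smul]; abel
  rw [hseg, smul_eq_mul, smul_eq_mul] at hconc
  rw [mem_ofPred_eq, smul_eq_mul, le_inv_mul_iff₀ ht0]
  linarith

variable {ι : Type*} (l : ι → E →ᴬ[ℝ] ℝ)

def signCell (σ : ι → SignType) : Set E := {x | ∀ i, SignType.sign (l i x) = σ i}

theorem convex_signCell (σ : ι → SignType) : Convex ℝ (signCell l σ) := by
  have hcell : signCell l σ = ⋂ i, (l i : E →ᵃ[ℝ] ℝ) ⁻¹' {t | SignType.sign t = σ i} := by
    ext; simp [signCell]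
  rw [hcell]
  exact convex_iInter fun i => (convex_setOf_sign_eq (σ i)).affine_preimage _

variable [Fintype ι]

theorem concaveOn_log_prod_signCell {σ : ι → SignType} (hσ : ∀ i, σ i ≠ 0) :
    ConcaveOn ℝ (signCell l σ) fun x => Real.log (∏ i, l i x) := by
  refine (concaveOn_finset_sum (t := Finset.univ) (f := fun i x => Real.log (l i x))
    (convex_signCell l σ) fun i _ => ?_).congr fun x hx => ?_
  · exact ((concaveOn_log_setOf_sign_eq (hσ i)).comp_affineMap (l i : E →ᵃ[ℝ] ℝ)).subset
      (fun x hx => hx i) (convex_signCell l σ)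
  · exact (Real.log_prod fun i _ => sign_ne_zero.1 ((hx i).trans_ne (hσ i))).symm

theorem differentiable_prod_continuousAffineMap : Differentiable ℝ fun x => ∏ i, l i x := by
  fun_prop

theorem prod_eq_of_mem_signCell_of_fderiv_eq_zero {σ : ι → SignType} {x y : E}
    (hx : x ∈ signCell l σ) (hy : y ∈ signCell l σ)
    (hcx : fderiv ℝ (fun x => ∏ i, l i x) x = 0) (hcy : fderiv ℝ (fun x => ∏ i, l i x) y = 0) :
    ∏ i, l i x = ∏ i, l i y := by
  by_cases hσ : ∃ i, σ i = 0
  · obtain ⟨i, hi⟩ := hσ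
    rw [Finset.prod_eq_zero (Finset.mem_univ i) (sign_eq_zero_iff.1 ((hx i).trans hi)),
      Finset.prod_eq_zero (Finset.mem_univ i) (sign_eq_zero_iff.1 ((hy i).trans hi))]
  push Not at hσ
  have hmax : ∀ z ∈ signCell l σ, fderiv ℝ (fun x => ∏ i, l i x) z = 0 →
      IsMaxOn (fun x => Real.log (∏ i, l i x)) (signCell l σ) z := by
    intro z hz hcz
    refine (concaveOn_log_prod_signCell l hσ).isMaxOn_of_hasFDerivAt_eq_zero hz ?_
    have hne : ∏ i, l i z ≠ 0 :=
      Finset.prod_ne_zero_iff.2 fun i _ => sign_ne_zero.1 ((hz i).trans_ne (hσ i))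
    simpa [hcz] using ((differentiable_prod_continuousAffineMap l z).hasFDerivAt.log hne)
  have hsign : ∀ z ∈ signCell l σ, SignType.sign (∏ i, l i z) = ∏ i, σ i := fun z hz => by
    rw [← signHom_apply, map_prod]
    exact Finset.prod_congr rfl fun i _ => hz i
  exact eq_of_sign_eq_of_log_eq ((hsign x hx).trans (hsign y hy).symm)
    (le_antisymm (hmax y hy hcy hx) (hmax x hx hcx hy))

theorem finite_setOf_critical_values_prod_continuousAffineMap :
    {v : ℝ | ∃ x, fderiv ℝ (fun x => ∏ i, l i x) x = 0 ∧ ∏ i, l i x = v}.Finite := by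
  set F : E → ℝ := fun x => ∏ i, l i x
  have hcell (σ : ι → SignType) :
      (F '' ({x | fderiv ℝ F x = 0} ∩ signCell l σ)).Subsingleton := by
    rintro _ ⟨x, ⟨hcx, hx⟩, rfl⟩ _ ⟨y, ⟨hcy, hy⟩, rfl⟩
    exact prod_eq_of_mem_signCell_of_fderiv_eq_zero l hx hy hcx hcy
  refine (Set.finite_iUnion fun σ => (hcell σ).finite).subset ?_
  rintro _ ⟨x, hcx, rfl⟩
  exact Set.mem_iUnion.2 ⟨fun i => SignType.sign (l i x), x, ⟨hcx, fun i => rfl⟩, rfl⟩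

end ProductOfAffineMaps

/-- Let `l₁, …, l_k : ℝⁿ → ℝ` be affine functions and
`f x = ∏ i, l i x`. Then the set of critical values of `f` is finite. -/
theorem stmt6 (n k : ℕ) (a : Fin k → (Fin n → ℝ)) (c : Fin k → ℝ)
    (f : (Fin n → ℝ) → ℝ) (hf : ∀ x, f x = ∏ i, ((∑ j, a i j * x j) + c i)) :
    Set.Finite {y : ℝ | ∃ x : Fin n → ℝ, fderiv ℝ f x = 0 ∧ f x = y} := by
  let l : Fin k → (Fin n → ℝ) →ᴬ[ℝ] ℝ := fun i =>
    (∑ j, a i j • ContinuousLinearMap.proj j).toContinuousAffineMap +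
      ContinuousAffineMap.const ℝ _ (c i)
  have hfl : f = fun x => ∏ i, l i x := funext fun x => by simp [hf, l]
  rw [hfl]
  exact finite_setOf_critical_values_prod_continuousAffineMap l
end

section
/- Let l₁,…,l_k : ℝⁿ → ℝ be affine functions (degree-1 polynomials) and let f : ℝⁿ → ℝ be f(x) = ∏_{i=1}^k l_i(x). Then there exists ε₀ > 0 such that every ε with 0 < ε ≤ ε₀ is a regular value of f, i.e., for every x ∈ ℝⁿ with f(x) = ε, the derivative Df(x) is nonzero. -/
/-!
At a point `z` where `F = ∏ ℓᵢ` does not vanish, `dF(z) = F(z) · ∑ dℓᵢ / ℓᵢ(z)`, so `z` is critical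
iff `∑ (ℓᵢ(w) - ℓᵢ(z)) / ℓᵢ(z) = 0` for all `w`. If `x` and `y` are critical points at which every
factor has the same sign, adding these identities for `(z, w) = (x, y)` and `(y, x)` gives
`∑ (ℓᵢ(y) - ℓᵢ(x))² / (ℓᵢ(x) ℓᵢ(y)) = 0`, hence `ℓᵢ(x) = ℓᵢ(y)` for all `i` and `F(x) = F(y)`.
So there are at most `2^k` nonzero critical values, and all small enough `ε > 0` avoid them.
-/

open Finset

lemma eq_of_sum_sub_div_eq_zero {ι : Type*} [Fintype ι] {u v : ι → ℝ}
    (hpos : ∀ i, 0 < u i * v i) (huv : ∑ i, (v i - u i) / u i = 0)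
    (hvu : ∑ i, (u i - v i) / v i = 0) : u = v := by
  have hsum : ∑ i, (v i - u i) ^ 2 / (u i * v i) = 0 := by
    calc ∑ i, (v i - u i) ^ 2 / (u i * v i)
        = ∑ i, ((v i - u i) / u i + (u i - v i) / v i) := by
          refine sum_congr rfl fun i _ => ?_
          have hu : u i ≠ 0 := left_ne_zero_of_mul (hpos i).ne'
          have hv : v i ≠ 0 := right_ne_zero_of_mul (hpos i).ne'
          field_simp
          ring
      _ = 0 := by rw [sum_add_distrib, huv, hvu, add_zero]
  funext i
  have hi := (sum_eq_zero_iff_of_nonneg fun i _ => div_nonneg (sq_nonneg _) (hpos i).le).mp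
    hsum i (mem_univ i)
  have hsq : (v i - u i) ^ 2 = 0 := (div_eq_zero_iff.mp hi).resolve_right (hpos i).ne'
  linarith [pow_eq_zero_iff (n := 2) two_ne_zero |>.mp hsq]

lemma Set.Finite.exists_pos_forall_notMem_of_zero_notMem {S : Set ℝ} (hS : S.Finite)
    (h0 : (0 : ℝ) ∉ S) : ∃ ε₀ > 0, ∀ ε, 0 < ε → ε ≤ ε₀ → ε ∉ S := by
  obtain ⟨δ, hδ, hball⟩ := Metric.mem_nhds_iff.mp (hS.isClosed.compl_mem_nhds h0)
  refine ⟨δ / 2, half_pos hδ, fun ε hε hεδ => hball ?_⟩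
  rw [Metric.mem_ball, Real.dist_0_eq_abs, abs_of_pos hε]
  linarith

section ProdAffine

variable {E ι : Type*} [NormedAddCommGroup E] [NormedSpace ℝ E] [Fintype ι]
  (L : ι → E →L[ℝ] ℝ) (c : ι → ℝ)

theorem hasFDerivAt_prod_affine [DecidableEq ι] (x : E) :
    HasFDerivAt (fun x => ∏ i, (L i x + c i))
      (∑ i, (∏ j ∈ univ.erase i, (L j x + c j)) • L i) x :=
  HasFDerivAt.finsetProd fun i _ => (L i).hasFDerivAt.add_const (c i)

theorem sum_div_eq_zero_of_fderiv_prod_affine_eq_zero {z : E}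
    (hz : fderiv ℝ (fun x => ∏ i, (L i x + c i)) z = 0) (hne : ∏ i, (L i z + c i) ≠ 0)
    (w : E) : ∑ i, L i w / (L i z + c i) = 0 := by
  classical
  have hcofactor : ∀ i, ∏ j ∈ univ.erase i, (L j z + c j)
      = (∏ j, (L j z + c j)) / (L i z + c i) := fun i =>
    eq_div_of_mul_eq (prod_ne_zero_iff.mp hne i (mem_univ i))
      (by rw [mul_comm]; exact mul_prod_erase univ (fun j => L j z + c j) (mem_univ i))
  have hw := congr($((hasFDerivAt_prod_affine L c z).fderiv.symm.trans hz) w)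
  simp only [_root_.sum_apply, smul_apply, smul_eq_mul, zero_apply, hcofactor] at hw
  have hscaled : (∏ i, (L i z + c i)) * ∑ i, L i w / (L i z + c i) = 0 := by
    rw [mul_sum, ← hw]
    exact sum_congr rfl fun i _ => by ring
  exact (mul_eq_zero.mp hscaled).resolve_left hne

theorem prod_affine_eq_of_fderiv_eq_zero_of_forall_mul_pos {x y : E}
    (hx : fderiv ℝ (fun x => ∏ i, (L i x + c i)) x = 0)
    (hy : fderiv ℝ (fun x => ∏ i, (L i x + c i)) y = 0)
    (hsign : ∀ i, 0 < (L i x + c i) * (L i y + c i)) :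
    ∏ i, (L i x + c i) = ∏ i, (L i y + c i) := by
  have hne : ∀ z, (∀ i, L i z + c i ≠ 0) → ∏ i, (L i z + c i) ≠ 0 := fun z hz =>
    prod_ne_zero_iff.mpr fun i _ => hz i
  have hdiff : ∀ p q i, L i q + c i - (L i p + c i) = L i (q - p) := fun p q i => by
    rw [map_sub]; ring
  have hxy := sum_div_eq_zero_of_fderiv_prod_affine_eq_zero L c hx
    (hne x fun i => left_ne_zero_of_mul (hsign i).ne') (y - x)
  have hyx := sum_div_eq_zero_of_fderiv_prod_affine_eq_zero L c hy
    (hne y fun i => right_ne_zero_of_mul (hsign i).ne') (x - y)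
  simp only [← hdiff] at hxy hyx
  have hfactors := eq_of_sum_sub_div_eq_zero hsign hxy hyx
  exact prod_congr rfl fun i _ => congrFun hfactors i

theorem finite_prod_affine_image_fderiv_eq_zero_diff_zero :
    ((fun x => ∏ i, (L i x + c i)) '' {x | fderiv ℝ (fun x => ∏ i, (L i x + c i)) x = 0}
      \ {0}).Finite := by
  set F : E → ℝ := fun x => ∏ i, (L i x + c i)
  let level : (ι → Prop) → Set ℝ := fun s =>
    F '' {x | fderiv ℝ F x = 0 ∧ ∀ i, (0 < L i x + c i ↔ s i)} \ {0}
  have hlevel : ∀ s, (level s).Subsingleton := by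
    rintro s _ ⟨⟨x, ⟨hx, hxs⟩, rfl⟩, hx0⟩ _ ⟨⟨y, ⟨hy, hys⟩, rfl⟩, hy0⟩
    refine prod_affine_eq_of_fderiv_eq_zero_of_forall_mul_pos L c hx hy fun i => ?_
    have hxi := prod_ne_zero_iff.mp hx0 i (mem_univ i)
    have hyi := prod_ne_zero_iff.mp hy0 i (mem_univ i)
    have hiff := (hxs i).trans (hys i).symm
    rcases hxi.lt_or_gt with hxn | hxp
    · exact mul_pos_of_neg_of_neg hxn (hyi.lt_or_gt.resolve_right (mt hiff.mpr hxn.not_gt))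
    · exact mul_pos hxp (hiff.mp hxp)
  refine (Set.finite_iUnion fun s => (hlevel s).finite).subset ?_
  rintro _ ⟨⟨x, hx, rfl⟩, hx0⟩
  exact Set.mem_iUnion.mpr ⟨fun i => 0 < L i x + c i, ⟨x, ⟨hx, fun _ => Iff.rfl⟩, rfl⟩, hx0⟩

end ProdAffine

/-- Let `l₁, …, l_k : ℝⁿ → ℝ` be affine functions and `f x = ∏ i, l i x`.
Then there is `ε₀ > 0` such that every `ε` with `0 < ε ≤ ε₀` is a regular value of `f`. -/
theorem stmt7 (n k : ℕ) (a : Fin k → (Fin n → ℝ)) (c : Fin k → ℝ)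
    (f : (Fin n → ℝ) → ℝ) (hf : ∀ x, f x = ∏ i, ((∑ j, a i j * x j) + c i)) :
    ∃ ε₀ : ℝ, 0 < ε₀ ∧ ∀ ε : ℝ, 0 < ε → ε ≤ ε₀ →
      ∀ x : Fin n → ℝ, f x = ε → fderiv ℝ f x ≠ 0 := by
  let L : Fin k → (Fin n → ℝ) →L[ℝ] ℝ := fun i => ∑ j, a i j • ContinuousLinearMap.proj j
  have hfL : f = fun x => ∏ i, (L i x + c i) := by
    funext x
    simp [L, hf]
  obtain ⟨ε₀, hε₀, hsmall⟩ := (finite_prod_affine_image_fderiv_eq_zero_diff_zero L c)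
    |>.exists_pos_forall_notMem_of_zero_notMem fun h => h.2 rfl
  refine ⟨ε₀, hε₀, fun ε hε hεε₀ x hx hcrit => hsmall ε hε hεε₀ ⟨⟨x, ?_, ?_⟩, hε.ne'⟩⟩
  · rwa [← hfL]
  · rw [← hfL, hx]
end

section
/- Let a₁,…,a_k, b₁,…,b_k ∈ ℝ and define h : ℝ → ℝ by h(t) = ∏_{i=1}^k (a_i t + b_i). Suppose t₀ ∈ ℝ satisfies a_i t₀ + b_i > 0 for all i, not all a_i are zero, and h′(t₀) = 0. Then h″(t₀) < 0; in particular every such critical point of h is a strict local maximum. -/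
/-!
Where all factors are nonzero, `h′ = h * g` with `g t = ∑ i, a i / (a i * t + b i)` the
logarithmic derivative of `h`. Differentiating this at a critical point `t₀` kills the term
`h′ * g`, so `h″ t₀ = h t₀ * g′ t₀ = -h t₀ * ∑ i, (a i / (a i * t₀ + b i)) ^ 2`, which is
negative because `h t₀ > 0` and some `a i ≠ 0`.
-/

open Filter Topology

section
variable {𝕜 : Type*} [NontriviallyNormedField 𝕜]

theorem deriv_deriv_eq_of_deriv_eventuallyEq_mul {f g : 𝕜 → 𝕜} {x g' : 𝕜}
    (hfg : deriv f =ᶠ[𝓝 x] fun t => f t * g t) (hf : DifferentiableAt 𝕜 f x)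
    (hg : HasDerivAt g g' x) (hcrit : deriv f x = 0) :
    deriv (deriv f) x = f x * g' := by
  rw [hfg.deriv_eq, (hf.hasDerivAt.fun_mul hg).deriv, hcrit, zero_mul, zero_add]

variable {ι : Type*} [Fintype ι] (a b : ι → 𝕜) {t : 𝕜}

theorem deriv_prod_affine_eq_mul_sum_div (ht : ∀ i, a i * t + b i ≠ 0) :
    deriv (fun t => ∏ i, (a i * t + b i)) t =
      (∏ i, (a i * t + b i)) * ∑ i, a i / (a i * t + b i) := by
  have hlog := logDeriv_prod (s := Finset.univ) (f := fun i t => a i * t + b i) (x := t)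
    (fun i _ => ht i) (fun i _ => by fun_prop)
  rw [logDeriv_apply, div_eq_iff (Finset.prod_ne_zero_iff.2 fun i _ => ht i)] at hlog
  simpa [logDeriv_apply, mul_comm] using hlog

theorem hasDerivAt_sum_div_affine (ht : ∀ i, a i * t + b i ≠ 0) :
    HasDerivAt (fun t => ∑ i, a i / (a i * t + b i)) (-∑ i, (a i / (a i * t + b i)) ^ 2) t := by
  rw [← Finset.sum_neg_distrib]
  refine HasDerivAt.fun_sum fun i _ => ?_
  have hfac : HasDerivAt (fun t => a i * t + b i) (a i) t := by
    simpa using ((hasDerivAt_id t).const_mul (a i)).add_const (b i)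
  have hquot := (hfac.fun_inv (ht i)).const_mul (a i)
  simp only [← div_eq_mul_inv] at hquot
  exact hquot.congr_deriv (by rw [div_pow, mul_div_assoc', mul_neg, neg_div, sq (a i)])

end

/-- Let `h t = ∏ i, (a i * t + b i)` and suppose `t₀` satisfies
`a i * t₀ + b i > 0` for all `i`, not all `a i` are zero, and `h′ t₀ = 0`.
Then `h″ t₀ < 0`; in particular such a critical point is a strict local maximum. -/
theorem stmt8 (k : ℕ) (a b : Fin k → ℝ) (h : ℝ → ℝ)
    (hh : ∀ t, h t = ∏ i, (a i * t + b i))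
    (t₀ : ℝ) (hpos : ∀ i, 0 < a i * t₀ + b i) (ha : ∃ i, a i ≠ 0)
    (hcrit : deriv h t₀ = 0) :
    deriv (deriv h) t₀ < 0 := by
  obtain rfl : h = fun t => ∏ i, (a i * t + b i) := funext hh
  have hne : ∀ᶠ t in 𝓝 t₀, ∀ i, a i * t + b i ≠ 0 := by
    refine eventually_all.2 fun i => ?_
    have hcont : ContinuousAt (fun t => a i * t + b i) t₀ := by fun_prop
    exact (hcont.eventually (lt_mem_nhds (hpos i))).mono fun t ht => ht.ne'
  rw [deriv_deriv_eq_of_deriv_eventuallyEq_mul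
    (hne.mono fun t => deriv_prod_affine_eq_mul_sum_div a b) (by fun_prop)
    (hasDerivAt_sum_div_affine a b hne.self_of_nhds) hcrit]
  obtain ⟨i₀, hi₀⟩ := ha
  have hsq : 0 < ∑ i, (a i / (a i * t₀ + b i)) ^ 2 :=
    Finset.sum_pos' (fun i _ => sq_nonneg _)
      ⟨i₀, Finset.mem_univ _, sq_pos_of_ne_zero (div_ne_zero hi₀ (hpos i₀).ne')⟩
  exact mul_neg_of_pos_of_neg (Finset.prod_pos fun i _ => hpos i) (neg_neg_of_pos hsq)
end

section
/- Let M be a metrizable topological space, let N ⊆ M be any subset, and let U be an open subset of M with N ⊆ U. Then there exists an open set V ⊆ M with N ⊆ V and closure(V) ⊆ U ∪ closure(N). -/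
/-!
Since `Uᶜ` is closed and contains no point of `N`, the sets `N` and `Uᶜ \ closure N` are
separated, so in a completely normal space they have disjoint open neighbourhoods `V` and `W`.
The closure of `V` misses `W`, hence lies in `U ∪ closure N`.
-/

open Set

theorem exists_isOpen_superset_closure_subset_union_closure {X : Type*} [TopologicalSpace X]
    [CompletelyNormalSpace X] {N U : Set X} (hU : IsOpen U) (hNU : N ⊆ U) :
    ∃ V : Set X, IsOpen V ∧ N ⊆ V ∧ closure V ⊆ U ∪ closure N := by
  have hN_sep : Disjoint (closure N) (Uᶜ \ closure N) := disjoint_sdiff_right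
  have hA_sep : Disjoint N (closure (Uᶜ \ closure N)) :=
    (disjoint_compl_right_iff_subset.2 hNU).mono_right
      ((closure_mono sdiff_subset).trans hU.isClosed_compl.closure_subset)
  obtain ⟨V, W, hV, hW, hNV, hAW, hVW⟩ :=
    separatedNhds_iff_disjoint.2 (completely_normal hN_sep hA_sep)
  refine ⟨V, hV, hNV, fun x hx => ?_⟩
  by_contra hxU
  rw [mem_union, not_or] at hxU
  exact (hVW.closure_left hW).notMem_of_mem_left hx (hAW ⟨hxU.1, hxU.2⟩)

/-- good shrinking. Let `M` be a metrizable topological space, `N ⊆ M` any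
subset and `U ⊆ M` open with `N ⊆ U`. Then there is an open `V` with `N ⊆ V` and
`closure V ⊆ U ∪ closure N`. -/
theorem stmt12 {M : Type*} [TopologicalSpace M] [TopologicalSpace.MetrizableSpace M]
    (N U : Set M) (hU : IsOpen U) (hNU : N ⊆ U) :
    ∃ V : Set M, IsOpen V ∧ N ⊆ V ∧ closure V ⊆ U ∪ closure N :=
  exists_isOpen_superset_closure_subset_union_closure hU hNU
end
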